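/- arXiv:cond-mat/0309135 — 2 statements merged into one kernel-verified Lean document; each statement's English description precedes it below -/
import Mathlib

section
/- The gl(1|2) R-matrix satisfies the Yang–Baxter equation in braid form: for every parity function p : {1,2,3} → ℤ₂ and all λ, μ ∈ ℂ such that λ + ic ≠ 0, μ + ic ≠ 0 and λ + μ + ic ≠ 0, one has (ř_p(λ) ⊗ I₃)(I₃ ⊗ ř_p(λ+μ))(ř_p(μ) ⊗ I₃) = (I₃ ⊗ ř_p(μ))(ř_p(λ+μ) ⊗ I₃)(I₃ ⊗ ř_p(λ)) as 27×27 complex matrices, where the tensor products are the ordinary (ungraded) Kronecker products of a 9×9 matrix on ℂ³ ⊗ ℂ³ with the 3×3 identity I₃. -/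
open scoped BigOperators

noncomputable section

namespace Gl12

/-- The sign `(−1)^x` for `x ∈ ℤ₂`. -/
def eps (x : ZMod 2) : ℂ := if x = 0 then 1 else -1

/-- `a(λ) = λ/(λ + ic)`. -/
def af (c l : ℂ) : ℂ := l / (l + Complex.I * c)

/-- `b(λ) = ic/(λ + ic)`. -/
def bf (c l : ℂ) : ℂ := Complex.I * c / (l + Complex.I * c)

/-- The R-matrix `R_p(λ)^{αγ}_{βδ} = a(λ)(−1)^{p(α)p(γ)} δ^α_β δ^γ_δ + b(λ) δ^α_δ δ^γ_β`;
rows are indexed by `(α, γ)` and columns by `(β, δ)`. -/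
def Rmat {ι : Type*} [DecidableEq ι] (c : ℂ) (p : ι → ZMod 2) (l : ℂ) :
    Matrix (ι × ι) (ι × ι) ℂ := fun x y =>
  af c l * eps (p x.1 * p x.2) * (if x.1 = y.1 then 1 else 0) * (if x.2 = y.2 then 1 else 0)
    + bf c l * (if x.1 = y.2 then 1 else 0) * (if x.2 = y.1 then 1 else 0)

/-- `ř_p(λ)^{αγ}_{βδ} = R_p(λ)^{γα}_{βδ}`. -/
def Rcheck {ι : Type*} [DecidableEq ι] (c : ℂ) (p : ι → ZMod 2) (l : ℂ) :
    Matrix (ι × ι) (ι × ι) ℂ := fun x y => Rmat c p l (x.2, x.1) y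

/-- Super tensor product of (possibly rectangular) matrices with entries in an algebra:
`(A ⊗_p B)^{αγ}_{βδ} = (−1)^{(p(α)+p(β))p(γ)} A^α_β B^γ_δ`, where `p1` is the parity of the
row indices of `A`, `q1` the parity of the column indices of `A`, and `p2` the parity of the
row indices of `B`. -/
def stp {A : Type*} [NonUnitalNonAssocSemiring A] [Module ℂ A]
    {ι₁ ι₂ κ₁ κ₂ : Type*} (p1 : ι₁ → ZMod 2) (q1 : ι₂ → ZMod 2) (p2 : κ₁ → ZMod 2)
    (M : Matrix ι₁ ι₂ A) (N : Matrix κ₁ κ₂ A) : Matrix (ι₁ × κ₁) (ι₂ × κ₂) A :=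
  fun x y => eps ((p1 x.1 + q1 y.1) * p2 x.2) • (M x.1 y.1 * N x.2 y.2)

/-- Product of a scalar matrix with a matrix with entries in a module. -/
def cmulE {A : Type*} [AddCommMonoid A] [Module ℂ A] {ι κ μ : Type*} [Fintype κ]
    (M : Matrix ι κ ℂ) (X : Matrix κ μ A) : Matrix ι μ A :=
  fun i m => ∑ k, M i k • X k m

/-- Product of a matrix with entries in a module with a scalar matrix. -/
def emulC {A : Type*} [AddCommMonoid A] [Module ℂ A] {ι κ μ : Type*} [Fintype κ]
    (X : Matrix ι κ A) (M : Matrix κ μ ℂ) : Matrix ι μ A :=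
  fun i m => ∑ k, M k m • X i k

/-- The grading `(+,−,−)`: `p(1)=0, p(2)=p(3)=1`. -/
def gpmm : Fin 3 → ZMod 2 := ![0, 1, 1]

/-- The grading `(−,+,−)`: `p(2)=0, p(1)=p(3)=1`. -/
def gmpm : Fin 3 → ZMod 2 := ![1, 0, 1]

/-- The grading `(−,−,+)`: `p(3)=0, p(1)=p(2)=1`. -/
def gmmp : Fin 3 → ZMod 2 := ![1, 1, 0]

/-- The induced grading `g' = (+,−)`: `p'(1)=0, p'(2)=1`. -/
def ppar : Fin 2 → ZMod 2 := ![0, 1]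

/-- Trivial parity on a one-element index set (the row index of the row vector `B`). -/
def punit : Fin 1 → ZMod 2 := fun _ => 0

/-- A representation of the graded Yang–Baxter algebra with grading `p` on `H`:
`ř_p(λ−μ) (T(λ) ⊗_p T(μ)) = (T(μ) ⊗_p T(λ)) ř_p(λ−μ)` for all `λ, μ` in the domain `D`
(whenever `ř_p(λ−μ)` is defined, i.e. `λ − μ + ic ≠ 0`). -/
def IsRep {H : Type*} [AddCommGroup H] [Module ℂ H] (c : ℂ) (p : Fin 3 → ZMod 2) (D : Set ℂ)
    (T : ℂ → Matrix (Fin 3) (Fin 3) (Module.End ℂ H)) : Prop :=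
  ∀ l ∈ D, ∀ m ∈ D, l - m + Complex.I * c ≠ 0 →
    cmulE (Rcheck c p (l - m)) (stp p p p (T l) (T m)) =
      emulC (stp p p p (T m) (T l)) (Rcheck c p (l - m))

end Gl12

namespace Gl12

/-- Amplification of a matrix on `ℂ³ ⊗ ℂ³` to `ℂ³ ⊗ ℂ³ ⊗ ℂ³`, acting on the first two
factors (ordinary Kronecker product `M ⊗ I₃`). -/
def amp12 (M : Matrix (Fin 3 × Fin 3) (Fin 3 × Fin 3) ℂ) :
    Matrix (Fin 3 × Fin 3 × Fin 3) (Fin 3 × Fin 3 × Fin 3) ℂ :=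
  fun x y => M (x.1, x.2.1) (y.1, y.2.1) * (if x.2.2 = y.2.2 then 1 else 0)

/-- Amplification of a matrix on `ℂ³ ⊗ ℂ³` to `ℂ³ ⊗ ℂ³ ⊗ ℂ³`, acting on the last two
factors (ordinary Kronecker product `I₃ ⊗ M`). -/
def amp23 (M : Matrix (Fin 3 × Fin 3) (Fin 3 × Fin 3) ℂ) :
    Matrix (Fin 3 × Fin 3 × Fin 3) (Fin 3 × Fin 3 × Fin 3) ℂ :=
  fun x y => (if x.1 = y.1 then 1 else 0) * M x.2 y.2

def Pm (p : Fin 3 → ZMod 2) : Matrix (Fin 3 × Fin 3) (Fin 3 × Fin 3) ℂ :=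
  fun x y => eps (p x.1 * p x.2) * (if x.1 = y.2 then 1 else 0) * (if x.2 = y.1 then 1 else 0)

lemma eps_sq (t : ZMod 2) : eps t * eps t = 1 := by unfold eps; split <;> ring

lemma Rcheck_eq (c : ℂ) (p : Fin 3 → ZMod 2) (l : ℂ) :
    Rcheck c p l = af c l • Pm p + bf c l • 1 := by
  ext x y
  simp only [Rcheck, Rmat, Pm, Matrix.add_apply, Matrix.smul_apply, Matrix.one_apply,
    smul_eq_mul, Prod.ext_iff]
  rcases x with ⟨x1, x2⟩; rcases y with ⟨y1, y2⟩
  simp only []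
  rw [mul_comm (p x2) (p x1)]
  by_cases h1 : x1 = y1 <;> by_cases h2 : x2 = y2 <;> by_cases h3 : x1 = y2 <;>
    by_cases h4 : x2 = y1 <;> by_cases h5 : y1 = y2 <;>
    simp [h1, h2, h3, h4, h5, eq_comm] <;> ring

lemma Pm_sq (p : Fin 3 → ZMod 2) : Pm p * Pm p = 1 := by
  ext ⟨x1, x2⟩ ⟨y1, y2⟩
  simp only [Matrix.mul_apply, Pm, Matrix.one_apply, Fintype.sum_prod_type, Prod.ext_iff]
  simp [mul_ite, ite_mul, Finset.sum_ite_eq, Finset.sum_ite_eq']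
  by_cases h1 : x1 = y1 <;> by_cases h2 : x2 = y2 <;>
    simp [h1, h2, mul_comm (p y2) (p y1), eps_sq]

lemma amp12_add (M N : Matrix (Fin 3 × Fin 3) (Fin 3 × Fin 3) ℂ) :
    amp12 (M + N) = amp12 M + amp12 N := by
  ext x y; simp only [amp12, Matrix.add_apply, add_mul]

lemma amp12_smul (a : ℂ) (M : Matrix (Fin 3 × Fin 3) (Fin 3 × Fin 3) ℂ) :
    amp12 (a • M) = a • amp12 M := by
  ext x y; simp [amp12, mul_assoc]

lemma amp12_one : amp12 1 = 1 := by
  ext ⟨x1, x2, x3⟩ ⟨y1, y2, y3⟩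
  simp [amp12, Matrix.one_apply, Prod.ext_iff]
  split_ifs <;> tauto

lemma amp23_add (M N : Matrix (Fin 3 × Fin 3) (Fin 3 × Fin 3) ℂ) :
    amp23 (M + N) = amp23 M + amp23 N := by
  ext x y; simp only [amp23, Matrix.add_apply, mul_add]

lemma amp23_smul (a : ℂ) (M : Matrix (Fin 3 × Fin 3) (Fin 3 × Fin 3) ℂ) :
    amp23 (a • M) = a • amp23 M := by
  ext x y; simp [amp23]

lemma amp23_one : amp23 1 = 1 := by
  ext ⟨x1, x2, x3⟩ ⟨y1, y2, y3⟩
  simp [amp23, Matrix.one_apply, Prod.ext_iff]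
  split_ifs <;> tauto

lemma amp12_mul (M N : Matrix (Fin 3 × Fin 3) (Fin 3 × Fin 3) ℂ) :
    amp12 M * amp12 N = amp12 (M * N) := by
  ext ⟨x1, x2, x3⟩ ⟨y1, y2, y3⟩
  simp only [Matrix.mul_apply, amp12, Fintype.sum_prod_type]
  simp [mul_ite, ite_mul, Finset.sum_ite_eq, Finset.sum_ite_eq', Finset.mul_sum]

lemma amp23_mul (M N : Matrix (Fin 3 × Fin 3) (Fin 3 × Fin 3) ℂ) :
    amp23 M * amp23 N = amp23 (M * N) := by
  ext ⟨x1, x2, x3⟩ ⟨y1, y2, y3⟩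
  simp only [Matrix.mul_apply, amp23, Fintype.sum_prod_type]
  simp [mul_ite, ite_mul, Finset.sum_ite_eq, Finset.sum_ite_eq', Finset.mul_sum]

lemma braid (p : Fin 3 → ZMod 2) :
    amp12 (Pm p) * amp23 (Pm p) * amp12 (Pm p)
      = amp23 (Pm p) * amp12 (Pm p) * amp23 (Pm p) := by
  ext ⟨x1, x2, x3⟩ ⟨y1, y2, y3⟩
  simp only [Matrix.mul_apply, amp12, amp23, Pm, Fintype.sum_prod_type]
  simp [mul_ite, ite_mul, Finset.sum_ite_eq, Finset.sum_ite_eq', Finset.mul_sum,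
    Finset.sum_mul]
  split_ifs <;> first | rfl | (subst_vars; ring)

set_option maxHeartbeats 1000000 in

/-- The gl(1|2) R-matrix satisfies the Yang–Baxter equation in braid form:
`(ř_p(λ) ⊗ I₃)(I₃ ⊗ ř_p(λ+μ))(ř_p(μ) ⊗ I₃) = (I₃ ⊗ ř_p(μ))(ř_p(λ+μ) ⊗ I₃)(I₃ ⊗ ř_p(λ))`
as 27×27 complex matrices, for every parity function `p` and all admissible `λ, μ`. -/
theorem rcheck_yang_baxter (c : ℂ) (hc : c ≠ 0) (p : Fin 3 → ZMod 2) (l m : ℂ)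
    (hl : l + Complex.I * c ≠ 0) (hm : m + Complex.I * c ≠ 0)
    (hlm : l + m + Complex.I * c ≠ 0) :
    amp12 (Rcheck c p l) * amp23 (Rcheck c p (l + m)) * amp12 (Rcheck c p m) =
      amp23 (Rcheck c p m) * amp12 (Rcheck c p (l + m)) * amp23 (Rcheck c p l) := by
  have e12 : ∀ t, amp12 (Rcheck c p t) = af c t • amp12 (Pm p) + bf c t • 1 := fun t => by
    rw [Rcheck_eq, amp12_add, amp12_smul, amp12_smul, amp12_one]
  have e23 : ∀ t, amp23 (Rcheck c p t) = af c t • amp23 (Pm p) + bf c t • 1 := fun t => by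
    rw [Rcheck_eq, amp23_add, amp23_smul, amp23_smul, amp23_one]
  set Q := amp12 (Pm p) with hQdef
  set R := amp23 (Pm p) with hRdef
  have hQQ : Q * Q = 1 := by rw [hQdef, amp12_mul, Pm_sq, amp12_one]
  have hRR : R * R = 1 := by rw [hRdef, amp23_mul, Pm_sq, amp23_one]
  have hbr : Q * R * Q = R * Q * R := braid p
  simp only [e12, e23]
  simp only [add_mul, mul_add, smul_mul_assoc, mul_smul_comm, smul_smul, one_mul, mul_one]
  simp only [mul_one, one_mul, hQQ, hRR, hbr]
  match_scalars <;> (simp only [af, bf]; field_simp <;> ring)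


end Gl12
end
end

section
/- Commutativity of transfer matrices: let T be a representation of the graded Yang–Baxter algebra with grading p on a complex vector space H, and let λ, μ be such that all quantities are defined and the 9×9 matrix ř_p(λ−μ) is invertible. Then the transfer matrices commute: t(λ) t(μ) = t(μ) t(λ), where t(λ) = Σ_{α=1}^{3} (−1)^{p(α)} T^α_α(λ). -/
open scoped BigOperators

noncomputable section

namespace Gl12

section Aux

variable {A : Type*} [AddCommMonoid A] [Module ℂ A]
variable {ι κ μ ν : Type*} [Fintype ι] [Fintype κ] [Fintype μ]

lemma cmulE_cmulE (M : Matrix ι κ ℂ) (N : Matrix κ μ ℂ) (X : Matrix μ ν A) :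
    cmulE M (cmulE N X) = cmulE (M * N) X := by
  ext i n
  simp only [cmulE, Matrix.mul_apply, Finset.smul_sum, Finset.sum_smul, smul_smul]
  exact Finset.sum_comm

lemma cmulE_one [DecidableEq ι] (X : Matrix ι ν A) : cmulE (1 : Matrix ι ι ℂ) X = X := by
  ext i n
  simp [cmulE, Matrix.one_apply, ite_smul]

lemma cmulE_emulC (M : Matrix ι κ ℂ) (X : Matrix κ μ A) (N : Matrix μ ν ℂ) :
    cmulE M (emulC X N) = emulC (cmulE M X) N := by
  ext i n
  simp only [cmulE, emulC, Finset.smul_sum, smul_smul]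
  rw [Finset.sum_comm]
  exact Finset.sum_congr rfl fun j _ => Finset.sum_congr rfl fun k _ => by rw [mul_comm]

lemma trE_comm (M : Matrix ι κ ℂ) (X : Matrix κ ι A) :
    ∑ i, cmulE M X i i = ∑ k, emulC X M k k := by
  simp only [cmulE, emulC]
  exact Finset.sum_comm

lemma trE_diag [DecidableEq ι] (w : ι → ℂ) (X : Matrix ι ι A) :
    ∑ i, cmulE (Matrix.diagonal w) X i i = ∑ i, w i • X i i := by
  refine Finset.sum_congr rfl fun i _ => ?_
  simp [cmulE, Matrix.diagonal_apply, ite_smul]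

lemma eps_add (a b : ZMod 2) : eps (a + b) = eps a * eps b := by
  have h2 : ∀ x : ZMod 2, x = 0 ∨ x = 1 := by decide
  rcases h2 a with rfl | rfl <;> rcases h2 b with rfl | rfl <;>
    simp only [eps, show (1 : ZMod 2) + 1 = 0 from rfl, add_zero, zero_add] <;> norm_num

end Aux

/-- Commutativity of transfer matrices: if `T` is a representation of the
graded Yang–Baxter algebra with grading `p` and `ř_p(λ−μ)` is invertible, then
`t(λ) t(μ) = t(μ) t(λ)` where `t(λ) = Σ_α (−1)^{p(α)} T^α_α(λ)`. -/
theorem transfer_matrices_commute (c : ℂ) (hc : c ≠ 0) {H : Type*} [AddCommGroup H]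
    [Module ℂ H] (p : Fin 3 → ZMod 2) (D : Set ℂ)
    (T : ℂ → Matrix (Fin 3) (Fin 3) (Module.End ℂ H)) (hT : IsRep c p D T)
    (l m : ℂ) (hl : l ∈ D) (hm : m ∈ D) (hd : l - m + Complex.I * c ≠ 0)
    (hinv : IsUnit (Rcheck c p (l - m))) :
    (∑ α, eps (p α) • T l α α) * (∑ α, eps (p α) • T m α α)
      = (∑ α, eps (p α) • T m α α) * (∑ α, eps (p α) • T l α α) := by
  classical
  set R : Matrix (Fin 3 × Fin 3) (Fin 3 × Fin 3) ℂ := Rcheck c p (l - m) with hR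
  set w : Fin 3 × Fin 3 → ℂ := fun x => eps (p x.1 + p x.2) with hw
  -- R vanishes off parity blocks
  have hpar : ∀ x y : Fin 3 × Fin 3, p x.1 + p x.2 ≠ p y.1 + p y.2 → R x y = 0 := by
    rintro ⟨x1, x2⟩ ⟨y1, y2⟩ h
    show Rcheck c p (l - m) (x1, x2) (y1, y2) = 0
    simp only [Rcheck, Rmat]
    by_cases e1 : x2 = y1 <;> by_cases e2 : x1 = y2 <;>
      by_cases e3 : x2 = y2 <;> by_cases e4 : x1 = y1 <;>
      simp_all [add_comm]
  have hcomm : ∀ x y : Fin 3 × Fin 3, w x * R x y = R x y * w y := by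
    intro x y
    by_cases h : p x.1 + p x.2 = p y.1 + p y.2
    · simp [hw, h, mul_comm]
    · rw [hpar x y h, mul_zero, zero_mul]
  have hE : Matrix.diagonal w * R = R * Matrix.diagonal w := by
    ext x y
    rw [Matrix.diagonal_mul, Matrix.mul_diagonal]
    exact hcomm x y
  obtain ⟨u, hu⟩ := hinv
  set R' : Matrix (Fin 3 × Fin 3) (Fin 3 × Fin 3) ℂ := ↑u⁻¹ with hR'
  have huR : (↑u : Matrix (Fin 3 × Fin 3) (Fin 3 × Fin 3) ℂ) = R := hu
  have hRR' : R * R' = 1 := by rw [← huR, hR']; exact u.mul_inv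
  have hR'R : R' * R = 1 := by rw [← huR, hR']; exact u.inv_mul
  have hE' : Matrix.diagonal w * R' = R' * Matrix.diagonal w := by
    have h1 : R' * (Matrix.diagonal w * R) * R' = R' * (R * Matrix.diagonal w) * R' := by
      rw [hE]
    rw [← mul_assoc R' (Matrix.diagonal w) R, mul_assoc (R' * Matrix.diagonal w) R R',
      hRR', mul_one, ← mul_assoc R' R (Matrix.diagonal w), hR'R, one_mul] at h1
    exact h1.symm
  have hYB := hT l hl m hm hd
  set S : Matrix (Fin 3 × Fin 3) (Fin 3 × Fin 3) (Module.End ℂ H) :=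
    stp p p p (T l) (T m) with hSdef
  set S' : Matrix (Fin 3 × Fin 3) (Fin 3 × Fin 3) (Module.End ℂ H) :=
    stp p p p (T m) (T l) with hS'def
  have hS : S = cmulE R' (emulC S' R) := by
    rw [← hYB, cmulE_cmulE, hR'R, cmulE_one]
  have key : ∀ U V : Matrix (Fin 3) (Fin 3) (Module.End ℂ H),
      ∑ x : Fin 3 × Fin 3, w x • stp p p p U V x x
        = (∑ α, eps (p α) • U α α) * (∑ α, eps (p α) • V α α) := by
    intro U V
    rw [Finset.sum_mul_sum, Fintype.sum_prod_type]
    refine Finset.sum_congr rfl fun α _ => Finset.sum_congr rfl fun β _ => ?_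
    have hself : p α + p α = 0 := CharTwo.add_self_eq_zero _
    simp only [stp, hw, hself, zero_mul]
    rw [show eps 0 = 1 from rfl, one_smul, smul_mul_assoc, mul_smul_comm, smul_smul,
      ← eps_add]
  rw [← key (T l) (T m), ← key (T m) (T l), ← trE_diag, ← trE_diag]
  calc ∑ i, cmulE (Matrix.diagonal w) S i i
      = ∑ i, cmulE (Matrix.diagonal w * R') (emulC S' R) i i := by
        rw [hS, cmulE_cmulE]
    _ = ∑ i, cmulE (R' * Matrix.diagonal w) (emulC S' R) i i := by rw [hE']
    _ = ∑ i, emulC (cmulE (R' * Matrix.diagonal w) S') R i i := by rw [cmulE_emulC]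
    _ = ∑ i, cmulE R (cmulE (R' * Matrix.diagonal w) S') i i :=
        (trE_comm R (cmulE (R' * Matrix.diagonal w) S')).symm
    _ = ∑ i, cmulE (R * (R' * Matrix.diagonal w)) S' i i := by rw [cmulE_cmulE]
    _ = ∑ i, cmulE (Matrix.diagonal w) S' i i := by rw [← mul_assoc, hRR', one_mul]

end Gl12
end
end
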